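/- arXiv:math-ph/0403025 — 9 statements merged into one kernel-verified Lean document; each statement's English description precedes it below -/
import Mathlib

section
/- If p and q are unit quaternions with p i p* = q i q*, then p λ p* = q λ q* for every unit complex number λ (regarded as a quaternion of the form a + b·i with a² + b² = 1). Consequently the map 𝔮 : S² × S¹ → Sp₁ defined by 𝔮(z, λ) = q λ q*, where q is any unit quaternion with z = q i q*, is well defined. -/
open Quaternion

def quatI : ℍ[ℝ] := ⟨0, 1, 0, 0⟩

theorem mul_algebraMap_add_smul_mul_of_mul_eq_one {R A : Type*} [CommSemiring R] [Semiring A]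
    [Algebra R A] {r s : A} (hrs : r * s = 1) (a b : R) (x : A) :
    r * (algebraMap R A a + b • x) * s = algebraMap R A a + b • (r * x * s) := by
  rw [mul_add, add_mul, ← Algebra.commutes, mul_assoc, hrs, mul_one, mul_smul_comm, smul_mul_assoc]

theorem Quaternion.mul_star_eq_one_of_norm_eq_one {q : ℍ[ℝ]} (hq : ‖q‖ = 1) : q * star q = 1 := by
  rw [self_mul_star, normSq_eq_norm_mul_self, hq, mul_one, coe_one]

theorem frakq_well_defined_general (p q : ℍ[ℝ]) (hp : ‖p‖ = 1) (hq : ‖q‖ = 1)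
    (h : p * quatI * star p = q * quatI * star q)
    (a b : ℝ) :
    p * ((a : ℍ[ℝ]) + b • quatI) * star p = q * ((a : ℍ[ℝ]) + b • quatI) * star q := by
  rw [← algebraMap_def, mul_algebraMap_add_smul_mul_of_mul_eq_one (mul_star_eq_one_of_norm_eq_one hp),
    mul_algebraMap_add_smul_mul_of_mul_eq_one (mul_star_eq_one_of_norm_eq_one hq), h]

/-- If `p` and `q` are unit quaternions with `p i p* = q i q*`, then
`p λ p* = q λ q*` for every unit complex number `λ = a + b·i` (with
`a² + b² = 1`), so the map `𝔮(z, λ) = q λ q*` (where `z = q i q*`) is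
well defined. -/
theorem frakq_well_defined (p q : ℍ[ℝ]) (hp : ‖p‖ = 1) (hq : ‖q‖ = 1)
    (h : p * quatI * star p = q * quatI * star q)
    (a b : ℝ) (hab : a ^ 2 + b ^ 2 = 1) :
    p * ((a : ℍ[ℝ]) + b • quatI) * star p = q * ((a : ℍ[ℝ]) + b • quatI) * star q :=
  frakq_well_defined_general p q hp hq h a b
end

section
/- Let z be a purely imaginary unit quaternion and let p, q be unit quaternions. Then p z p* = q z q* if and only if there exist real numbers s, t with s² + t² = 1 such that q = p·(s + t·z). (This describes the fibers of the principal S¹-bundle map f : S² × Sp₁ → S² × S², f(z, q) = (z, q z q*).) -/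
/-!
Conjugation by unit quaternions `p`, `q` agrees on `z` exactly when `w = p* q` commutes with `z`.
For a purely imaginary `z ≠ 0` the centralizer of `z` is the plane `ℝ + ℝ z`: if `w.im` commutes
with `z`, then `w.im * z` is fixed by conjugation, hence real, and multiplying by `z` once more
(using `z² = -|z|²`) shows that `w.im` is a real multiple of `z`. Finally `q = p w`, and `|w| = 1`
reads `s² + t² = 1` for `w = s + t z`.
-/

open Quaternion

theorem Unitary.conj_eq_conj_iff_commute {R : Type*} [Monoid R] [StarMul R] {p q : R}
    (hp : p ∈ unitary R) (hq : q ∈ unitary R) (z : R) :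
    p * z * star p = q * z * star q ↔ Commute (star p * q) z := by
  constructor
  · intro h
    calc star p * q * z = star p * (q * z * star q) * q := by
          simp only [mul_assoc, star_mul_self_of_mem hq, mul_one]
      _ = star p * (p * z * star p) * q := by rw [h]
      _ = z * (star p * q) := by simp only [← mul_assoc, star_mul_self_of_mem hp, one_mul]
  · intro h
    calc p * z * star p = p * (z * (star p * q)) * star q := by
          simp only [mul_assoc, mul_star_self_of_mem hq, mul_one]
      _ = p * (star p * q * z) * star q := by rw [h.eq]
      _ = q * z * star q := by simp only [← mul_assoc, mul_star_self_of_mem hp, one_mul]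

namespace Quaternion

variable {R : Type*}

theorem mem_unitary_iff_normSq_eq_one [CommRing R] {q : ℍ[R]} :
    q ∈ unitary ℍ[R] ↔ normSq q = 1 := by
  rw [Unitary.mem_iff, star_mul_self, self_mul_star, and_self, ← coe_one, coe_inj]

theorem normSq_eq_one_of_norm_eq_one {q : ℍ[ℝ]} (hq : ‖q‖ = 1) : normSq q = 1 := by
  rw [normSq_eq_norm_mul_self, hq, mul_one]

theorem normSq_coe_add_smul [CommRing R] {z : ℍ[R]} (hz : z.re = 0) (s t : R) :
    normSq ((s : ℍ[R]) + t • z) = s ^ 2 + t ^ 2 * normSq z := by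
  simp only [normSq_def', re_add, re_coe, re_smul, hz, imI_add, imI_coe, imI_smul, imJ_add,
    imJ_coe, imJ_smul, imK_add, imK_coe, imK_smul, smul_eq_mul]
  ring

theorem commute_iff_exists_eq_coe_add_smul [Field R] [CharZero R] {w z : ℍ[R]} (hz : z.re = 0)
    (hz0 : normSq z ≠ 0) : Commute w z ↔ ∃ s t : R, w = s + t • z := by
  constructor
  · intro h
    have hcomm : w.im * z = z * w.im := by
      rw [← sub_eq_of_eq_add' (re_add_im w).symm]
      exact (h.sub_left (coe_commute w.re z)).eq
    have hreal : w.im * z = ((w.im * z).re : ℍ[R]) := by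
      rw [← star_eq_self, star_mul, star_eq_neg.2 hz, star_eq_neg.2 (re_im w), neg_mul_neg, hcomm]
    have hzz : z * z = -((normSq z : R) : ℍ[R]) := by
      rw [← star_mul_self, star_eq_neg.2 hz, neg_mul, neg_neg]
    have hsmul : normSq z • w.im = -(w.im * z).re • z := by
      rw [← coe_mul_eq_smul, ← coe_mul_eq_smul, coe_neg, ← hreal, neg_mul, mul_assoc, hzz,
        mul_neg, neg_neg, coe_commutes]
    refine ⟨w.re, (normSq z)⁻¹ * -(w.im * z).re, ?_⟩
    rw [mul_smul, ← hsmul, inv_smul_smul₀ hz0, re_add_im]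
  · rintro ⟨s, t, rfl⟩
    exact (coe_commute s z).add_left ((Commute.refl z).smul_left t)

end Quaternion

/-- For a purely imaginary unit quaternion `z` and unit quaternions `p`, `q`:
`p z p* = q z q*` iff `q = p (s + t z)` for some reals `s, t` with `s² + t² = 1`.
This describes the fibers of the principal `S¹`-bundle map
`f : S² × Sp₁ → S² × S²`, `f(z, q) = (z, q z q*)`. -/
theorem fiber_of_conjugation (z p q : ℍ[ℝ])
    (hz_im : z.re = 0) (hz : ‖z‖ = 1) (hp : ‖p‖ = 1) (hq : ‖q‖ = 1) :
    p * z * star p = q * z * star q ↔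
      ∃ s t : ℝ, s ^ 2 + t ^ 2 = 1 ∧ q = p * ((s : ℍ[ℝ]) + t • z) := by
  have hzn := normSq_eq_one_of_norm_eq_one hz
  have hpU := mem_unitary_iff_normSq_eq_one.2 (normSq_eq_one_of_norm_eq_one hp)
  have hqU := mem_unitary_iff_normSq_eq_one.2 (normSq_eq_one_of_norm_eq_one hq)
  have hwU : star p * q ∈ unitary ℍ[ℝ] := mul_mem (Unitary.star_mem hpU) hqU
  rw [Unitary.conj_eq_conj_iff_commute hpU hqU,
    commute_iff_exists_eq_coe_add_smul hz_im (hzn ▸ one_ne_zero)]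
  refine exists₂_congr fun s t => ⟨fun hw => ⟨?_, ?_⟩, fun ⟨_, hqw⟩ => ?_⟩
  · rwa [mem_unitary_iff_normSq_eq_one, hw, normSq_coe_add_smul hz_im, hzn, mul_one] at hwU
  · rw [← hw, ← mul_assoc, Unitary.mul_star_self_of_mem hpU, one_mul]
  · rw [hqw, ← mul_assoc, Unitary.star_mul_self_of_mem hpU, one_mul]
end

section
/- Let z be a purely imaginary unit quaternion and let q be a unit quaternion with z = q i q*. Then the map λ ↦ q λ q*, defined on the unit complex numbers, is an injective group homomorphism into the group of unit quaternions, and its image is exactly {s + t·z : s, t ∈ ℝ, s² + t² = 1}. In particular, the right S¹-action ρ(z, p, λ) = (z, p·𝔮(z, λ)) on S² × Sp₁, where 𝔮(z, λ) = q λ q*, is a free action. -/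
/-!
Conjugation `x ↦ q x q*` by a unit quaternion is multiplicative, norm-preserving and injective,
and it fixes the reals, so it maps the circle `{a + b i}` onto `{a + b z}` with `z = q i q*` and
carries the group structure of the circle along. Freeness follows because `p ≠ 0` can be
cancelled in `p λ = p`.
-/

open Quaternion

namespace Quaternion

theorem self_mul_star_of_norm_eq_one {q : ℍ[ℝ]} (hq : ‖q‖ = 1) : q * star q = 1 := by
  rw [self_mul_star, normSq_eq_norm_mul_self, hq, mul_one, coe_one]

theorem star_mul_self_of_norm_eq_one {q : ℍ[ℝ]} (hq : ‖q‖ = 1) : star q * q = 1 := by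
  rw [star_mul_self, normSq_eq_norm_mul_self, hq, mul_one, coe_one]

theorem conj_mul_conj {q : ℍ[ℝ]} (hq : ‖q‖ = 1) (x y : ℍ[ℝ]) :
    q * x * star q * (q * y * star q) = q * (x * y) * star q := by
  simp only [mul_assoc, ← mul_assoc (star q) q, star_mul_self_of_norm_eq_one hq, one_mul]

theorem norm_conj {q : ℍ[ℝ]} (hq : ‖q‖ = 1) (x : ℍ[ℝ]) : ‖q * x * star q‖ = ‖x‖ := by
  rw [norm_mul, norm_mul, norm_star, hq, one_mul, mul_one]

theorem conj_injective {q : ℍ[ℝ]} (hq : ‖q‖ = 1) :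
    Function.Injective fun x => q * x * star q := by
  intro x y h
  simpa only [mul_assoc, ← mul_assoc (star q) q, star_mul_self_of_norm_eq_one hq, one_mul,
    mul_one] using congrArg (fun w => star q * w * q) h

theorem conj_coe_add_smul {q : ℍ[ℝ]} (hq : ‖q‖ = 1) (a b : ℝ) (x : ℍ[ℝ]) :
    q * ((a : ℍ[ℝ]) + b • x) * star q = (a : ℍ[ℝ]) + b • (q * x * star q) := by
  rw [mul_add, add_mul, mul_smul_comm, smul_mul_assoc, ← coe_commutes, mul_assoc,
    self_mul_star_of_norm_eq_one hq, mul_one]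

theorem coe_add_smul_mul_coe_add_smul {x : ℍ[ℝ]} (hx : x * x = -1) (a b a' b' : ℝ) :
    ((a : ℍ[ℝ]) + b • x) * ((a' : ℍ[ℝ]) + b' • x) =
      ((a * a' - b * b' : ℝ) : ℍ[ℝ]) + (a * b' + b * a') • x := by
  have hcoe (r : ℝ) : (r : ℍ[ℝ]) = r • 1 := by rw [← coe_mul_eq_smul, mul_one]
  simp only [add_mul, mul_add, hcoe, smul_mul_smul_comm, one_mul, mul_one, hx]
  module

end Quaternion

@[simp] theorem quatI_re : quatI.re = 0 := rfl
@[simp] theorem quatI_imI : quatI.imI = 1 := rfl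
@[simp] theorem quatI_imJ : quatI.imJ = 0 := rfl
@[simp] theorem quatI_imK : quatI.imK = 0 := rfl

theorem quatI_mul_self : quatI * quatI = -1 := by
  ext <;> simp [re_mul, imI_mul, imJ_mul, imK_mul]

theorem norm_coe_add_smul_quatI (a b : ℝ) : ‖(a : ℍ[ℝ]) + b • quatI‖ = √(a ^ 2 + b ^ 2) := by
  rw [← Real.sqrt_mul_self (norm_nonneg _), ← normSq_eq_norm_mul_self, normSq_def']
  simp [re_smul]

theorem coe_add_smul_quatI_inj {a b a' b' : ℝ}
    (h : (a : ℍ[ℝ]) + b • quatI = (a' : ℍ[ℝ]) + b' • quatI) : a = a' ∧ b = b' :=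
  ⟨by simpa [re_smul] using congrArg QuaternionAlgebra.re h,
    by simpa using congrArg QuaternionAlgebra.imI h⟩

theorem conj_hom_injective_image_free_general (z q : ℍ[ℝ])
    (hq : ‖q‖ = 1)
    (hzq : z = q * quatI * star q) :
    -- group homomorphism: preserves multiplication of unit complex numbers
    (∀ a b a' b' : ℝ, a ^ 2 + b ^ 2 = 1 → a' ^ 2 + b' ^ 2 = 1 →
      (q * ((a : ℍ[ℝ]) + b • quatI) * star q) *
        (q * ((a' : ℍ[ℝ]) + b' • quatI) * star q) =
      q * (((a * a' - b * b' : ℝ) : ℍ[ℝ]) + (a * b' + b * a') • quatI) * star q) ∧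
    -- values are unit quaternions
    (∀ a b : ℝ, a ^ 2 + b ^ 2 = 1 → ‖q * ((a : ℍ[ℝ]) + b • quatI) * star q‖ = 1) ∧
    -- injectivity
    (∀ a b a' b' : ℝ, a ^ 2 + b ^ 2 = 1 → a' ^ 2 + b' ^ 2 = 1 →
      q * ((a : ℍ[ℝ]) + b • quatI) * star q =
        q * ((a' : ℍ[ℝ]) + b' • quatI) * star q → a = a' ∧ b = b') ∧
    -- the image is exactly {s + t·z : s² + t² = 1}
    ({w : ℍ[ℝ] | ∃ a b : ℝ, a ^ 2 + b ^ 2 = 1 ∧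
        w = q * ((a : ℍ[ℝ]) + b • quatI) * star q} =
      {w : ℍ[ℝ] | ∃ s t : ℝ, s ^ 2 + t ^ 2 = 1 ∧ w = (s : ℍ[ℝ]) + t • z}) ∧
    -- freeness of the right action `p ↦ p · 𝔮(z, λ)`
    (∀ p : ℍ[ℝ], ‖p‖ = 1 → ∀ a b : ℝ, a ^ 2 + b ^ 2 = 1 →
      p * (q * ((a : ℍ[ℝ]) + b • quatI) * star q) = p → a = 1 ∧ b = 0) := by
  refine ⟨fun a b a' b' _ _ => ?_, fun a b hab => ?_, fun a b a' b' _ _ h => ?_, ?_,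
    fun p hp a b _ h => ?_⟩
  · rw [conj_mul_conj hq, coe_add_smul_mul_coe_add_smul quatI_mul_self]
  · rw [norm_conj hq, norm_coe_add_smul_quatI, hab, Real.sqrt_one]
  · exact coe_add_smul_quatI_inj (conj_injective hq h)
  · simp only [conj_coe_add_smul hq, ← hzq]
  · have hp0 : p ≠ 0 := norm_ne_zero_iff.mp (hp ▸ one_ne_zero)
    have hfix : q * ((a : ℍ[ℝ]) + b • quatI) * star q =
        q * (((1 : ℝ) : ℍ[ℝ]) + (0 : ℝ) • quatI) * star q := by
      rw [(mul_eq_left₀ hp0).mp h, coe_one, zero_smul, add_zero, mul_one,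
        self_mul_star_of_norm_eq_one hq]
    exact coe_add_smul_quatI_inj (conj_injective hq hfix)

/-- Let `z` be a purely imaginary unit quaternion and `q` a unit quaternion with
`z = q i q*`.  Then `λ ↦ q λ q*` on unit complex numbers `λ = a + b·i` is:
(1) a group homomorphism into the unit quaternions (it preserves products and
has values of norm one), (2) injective, (3) has image exactly
`{s + t·z : s² + t² = 1}`, and (4) the induced right `S¹`-action
`p ↦ p · (q λ q*)` is free. -/
theorem conj_hom_injective_image_free (z q : ℍ[ℝ])
    (hz_im : z.re = 0) (hz : ‖z‖ = 1) (hq : ‖q‖ = 1)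
    (hzq : z = q * quatI * star q) :
    -- group homomorphism: preserves multiplication of unit complex numbers
    (∀ a b a' b' : ℝ, a ^ 2 + b ^ 2 = 1 → a' ^ 2 + b' ^ 2 = 1 →
      (q * ((a : ℍ[ℝ]) + b • quatI) * star q) *
        (q * ((a' : ℍ[ℝ]) + b' • quatI) * star q) =
      q * (((a * a' - b * b' : ℝ) : ℍ[ℝ]) + (a * b' + b * a') • quatI) * star q) ∧
    -- values are unit quaternions
    (∀ a b : ℝ, a ^ 2 + b ^ 2 = 1 → ‖q * ((a : ℍ[ℝ]) + b • quatI) * star q‖ = 1) ∧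
    -- injectivity
    (∀ a b a' b' : ℝ, a ^ 2 + b ^ 2 = 1 → a' ^ 2 + b' ^ 2 = 1 →
      q * ((a : ℍ[ℝ]) + b • quatI) * star q =
        q * ((a' : ℍ[ℝ]) + b' • quatI) * star q → a = a' ∧ b = b') ∧
    -- the image is exactly {s + t·z : s² + t² = 1}
    ({w : ℍ[ℝ] | ∃ a b : ℝ, a ^ 2 + b ^ 2 = 1 ∧
        w = q * ((a : ℍ[ℝ]) + b • quatI) * star q} =
      {w : ℍ[ℝ] | ∃ s t : ℝ, s ^ 2 + t ^ 2 = 1 ∧ w = (s : ℍ[ℝ]) + t • z}) ∧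
    -- freeness of the right action `p ↦ p · 𝔮(z, λ)`
    (∀ p : ℍ[ℝ], ‖p‖ = 1 → ∀ a b : ℝ, a ^ 2 + b ^ 2 = 1 →
      p * (q * ((a : ℍ[ℝ]) + b • quatI) * star q) = p → a = 1 ∧ b = 0) :=
  conj_hom_injective_image_free_general z q hq hzq
end

section
/- Let q be a unit quaternion and let λ be a unit complex number (a quaternion of the form a + b·i with a² + b² = 1). Then q λ q* = i if and only if either (q i q* = i and λ = i) or (q i q* = −i and λ = −i). Equivalently, the preimage of i under the map 𝔮 : S² × S¹ → Sp₁, 𝔮(z, λ) = q λ q* where z = q i q*, is the two-point set {(i, i), (−i, −i)}. -/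
/-! Conjugation `x ↦ q x q*` by a unit quaternion fixes the reals and preserves real parts, so
`q (a + b i) q* = a + b w` with `w = q i q*` purely imaginary. Comparing real parts with `i`
forces `a = 0`, hence `b = ±1` and `w = ±i`. -/

open Quaternion

namespace Quaternion

variable {R : Type*} [CommRing R]

theorem mul_coe_mul_star (q : ℍ[R]) (r : R) : q * r * star q = ↑(r * normSq q) := by
  rw [← coe_commutes, mul_assoc, self_mul_star, coe_mul]

theorem re_mul_mul_star (q x : ℍ[R]) : (q * x * star q).re = x.re * normSq q := by
  simp only [normSq_def', re_mul, re_star, imI_mul, imJ_mul, imK_mul, imI_star, imJ_star, imK_star]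
  ring

theorem mul_coe_add_smul_mul_star (q x : ℍ[R]) (a b : R) :
    q * (a + b • x) * star q = ↑(a * normSq q) + b • (q * x * star q) := by
  rw [mul_add, add_mul, mul_coe_mul_star, mul_smul_comm, smul_mul_assoc]

end Quaternion

/-- For a unit quaternion `q` and a unit complex number `λ = a + b·i`
(`a² + b² = 1`), one has `q λ q* = i` iff either (`q i q* = i` and `λ = i`) or
(`q i q* = -i` and `λ = -i`).  Equivalently, the preimage of `i` under
`𝔮 : S² × S¹ → Sp₁`, `𝔮(z, λ) = q λ q*` with `z = q i q*`, is
`{(i, i), (-i, -i)}`. -/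
theorem frakq_preimage_of_i (q : ℍ[ℝ]) (hq : ‖q‖ = 1)
    (a b : ℝ) (hab : a ^ 2 + b ^ 2 = 1) :
    q * ((a : ℍ[ℝ]) + b • quatI) * star q = quatI ↔
      (q * quatI * star q = quatI ∧ a = 0 ∧ b = 1) ∨
      (q * quatI * star q = -quatI ∧ a = 0 ∧ b = -1) := by
  have hN : normSq q = 1 := by rw [normSq_eq_norm_mul_self, hq, mul_one]
  have hw : (q * quatI * star q).re = 0 := by rw [re_mul_mul_star]; exact zero_mul _
  rw [mul_coe_add_smul_mul_star, hN, mul_one]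
  constructor
  · intro h
    have ha : a = 0 := by
      have hre := congrArg QuaternionAlgebra.re h
      rwa [re_add, re_coe, re_smul, hw, smul_zero, add_zero] at hre
    subst ha
    obtain rfl | rfl : b = 1 ∨ b = -1 := sq_eq_one_iff.mp (by linarith)
    · left; simpa using h
    · right; simpa [neg_eq_iff_eq_neg] using h
  · rintro (⟨hi, rfl, rfl⟩ | ⟨hi, rfl, rfl⟩) <;> simp [hi]
end

section
/- Let φ be a purely imaginary unit quaternion and let x, y be purely imaginary quaternions. Writing [x, φ] = xφ − φx and ⟨x, φ⟩ = −½(xφ + φx) (a real number), the following identity holds: x·y − y·x = ¼·([x, φ]·[y, φ] − [y, φ]·[x, φ]) − (⟨x, φ⟩·[y, φ] − ⟨y, φ⟩·[x, φ]). (This is the pointwise form of the decomposition of the 2-form a ∧ a used in the proof that the weak limit of a minimizing sequence of flat connections is flat.) -/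
open Quaternion

/-!
If `φ² = -1` and the anticommutators `a = xφ + φx`, `b = yφ + φy` are central, then
`φy = b - yφ` gives `xφ · yφ = b · xφ + xy`. Expanding `[x, φ] = 2xφ - a` and `[y, φ] = 2yφ - b`
yields `[x, φ][y, φ] = 4xy + b[x, φ] - a[y, φ] + ab`, and antisymmetrising in `x, y` gives the
identity. For purely imaginary quaternions `p, q` the anticommutator `pq + qp = pq + star (pq)` is
real, and a purely imaginary unit quaternion squares to `-1`.
-/

section Ring

variable {A : Type*} [Ring A] {φ x y : A}

theorem mul_mul_mul_eq_of_anticommutator_mem_center (hφ : φ * φ = -1)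
    (hb : y * φ + φ * y ∈ Set.center A) :
    x * φ * (y * φ) = (y * φ + φ * y) * (x * φ) + x * y := by
  set b := y * φ + φ * y
  have hbx : b * x = x * b := ((Set.mem_center_iff.mp hb).comm x).eq
  calc x * φ * (y * φ) = x * (b - y * φ) * φ := by simp only [b]; noncomm_ring
    _ = b * x * φ - x * y * (φ * φ) := by rw [mul_sub x, hbx]; noncomm_ring
    _ = b * (x * φ) + x * y := by rw [hφ]; noncomm_ring

theorem commutator_mul_commutator_of_anticommutator_mem_center (hφ : φ * φ = -1)
    (ha : x * φ + φ * x ∈ Set.center A) (hb : y * φ + φ * y ∈ Set.center A) :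
    (x * φ - φ * x) * (y * φ - φ * y) =
      4 * (x * y) + (y * φ + φ * y) * (x * φ - φ * x) - (x * φ + φ * x) * (y * φ - φ * y)
        + (x * φ + φ * x) * (y * φ + φ * y) := by
  set a := x * φ + φ * x
  set b := y * φ + φ * y
  have hbu : x * φ * b = b * (x * φ) := ((Set.mem_center_iff.mp hb).comm _).eq.symm
  have hab : b * a = a * b := ((Set.mem_center_iff.mp ha).comm _).eq.symm
  calc (x * φ - φ * x) * (y * φ - φ * y) = (2 * (x * φ) - a) * (2 * (y * φ) - b) := by
        simp only [a, b]; noncomm_ring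
    _ = 4 * (x * φ * (y * φ)) - 2 * (x * φ * b) - 2 * (a * (y * φ)) + a * b := by noncomm_ring
    _ = 4 * (b * (x * φ) + x * y) - 2 * (b * (x * φ)) - 2 * (a * (y * φ)) + a * b := by
        rw [mul_mul_mul_eq_of_anticommutator_mem_center hφ hb, hbu]
    _ = 4 * (x * y) + b * (2 * (x * φ) - a) - a * (2 * (y * φ) - b) + a * b := by
        rw [mul_sub b, hab]; noncomm_ring
    _ = _ := by simp only [a, b]; noncomm_ring

theorem commutator_sub_commutator_of_anticommutator_mem_center (hφ : φ * φ = -1)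
    (ha : x * φ + φ * x ∈ Set.center A) (hb : y * φ + φ * y ∈ Set.center A) :
    (x * φ - φ * x) * (y * φ - φ * y) - (y * φ - φ * y) * (x * φ - φ * x) =
      4 * (x * y - y * x)
        - 2 * ((x * φ + φ * x) * (y * φ - φ * y) - (y * φ + φ * y) * (x * φ - φ * x)) := by
  rw [commutator_mul_commutator_of_anticommutator_mem_center hφ ha hb,
    commutator_mul_commutator_of_anticommutator_mem_center hφ hb ha,
    ((Set.mem_center_iff.mp ha).comm (y * φ + φ * y)).eq]
  noncomm_ring

end Ring

section Algebra

variable {K A : Type*} [Field K] [Ring A] [Algebra K A] {φ x y : A} {c d : K}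

theorem commutator_eq_of_anticommutator_eq_algebraMap (h2 : (2 : K) ≠ 0) (hφ : φ * φ = -1)
    (hx : x * φ + φ * x = algebraMap K A c) (hy : y * φ + φ * y = algebraMap K A d) :
    x * y - y * x =
      (1 / 4 : K) • ((x * φ - φ * x) * (y * φ - φ * y) - (y * φ - φ * y) * (x * φ - φ * x))
        - ((-(1 / 2) * c) • (y * φ - φ * y) - (-(1 / 2) * d) • (x * φ - φ * x)) := by
  rw [commutator_sub_commutator_of_anticommutator_mem_center hφ
      (hx ▸ Set.algebraMap_mem_center c) (hy ▸ Set.algebraMap_mem_center d),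
    hx, hy, ← Algebra.smul_def, ← Algebra.smul_def, ← Nat.ofNat_nsmul_eq_mul,
    ← Nat.ofNat_nsmul_eq_mul]
  have h4 : (4 : K) ≠ 0 := by
    rw [show (4 : K) = 2 * 2 by norm_num]
    exact mul_ne_zero h2 h2
  match_scalars <;> field_simp <;> ring

end Algebra

namespace Quaternion

variable {R : Type*} [CommRing R] {p q : ℍ[R]}

theorem star_eq_neg_of_re_eq_zero (hp : p.re = 0) : star p = -p := by
  rw [star_eq_two_re_sub, hp, mul_zero, coe_zero, zero_sub]

theorem mul_add_mul_eq_coe_re (hp : p.re = 0) (hq : q.re = 0) :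
    p * q + q * p = ↑(p * q + q * p).re := by
  have h : p * q + q * p = ↑(2 * (p * q).re) := by
    rw [← self_add_star', star_mul, star_eq_neg_of_re_eq_zero hp, star_eq_neg_of_re_eq_zero hq,
      neg_mul_neg]
  rw [h, re_coe]

end Quaternion

/-- For a purely imaginary unit quaternion `φ` and purely imaginary quaternions
`x, y`, with `[x, φ] = xφ − φx` and `⟨x, φ⟩ = -½ Re(xφ + φx)`:
`xy − yx = ¼([x,φ][y,φ] − [y,φ][x,φ]) − (⟨x,φ⟩[y,φ] − ⟨y,φ⟩[x,φ])`.
This is the pointwise form of the decomposition of `a ∧ a` used in the proof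
that the weak limit of a minimizing sequence of flat connections is flat. -/
theorem commutator_decomposition (φ x y : ℍ[ℝ])
    (hφ_im : φ.re = 0) (hφ : ‖φ‖ = 1) (hx : x.re = 0) (hy : y.re = 0) :
    x * y - y * x =
      (1 / 4 : ℝ) • ((x * φ - φ * x) * (y * φ - φ * y)
          - (y * φ - φ * y) * (x * φ - φ * x))
      - ((-(1 / 2) * (x * φ + φ * x).re) • (y * φ - φ * y)
          - (-(1 / 2) * (y * φ + φ * y).re) • (x * φ - φ * x)) := by
  have hφφ : φ * φ = -1 := by
    rw [← sq, sq_eq_neg_normSq.mpr hφ_im, normSq_eq_norm_mul_self, hφ, mul_one, coe_one]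
  refine commutator_eq_of_anticommutator_eq_algebraMap two_ne_zero hφφ ?_ ?_ <;>
    rw [algebraMap_def]
  exacts [mul_add_mul_eq_coe_re hx hφ_im, mul_add_mul_eq_coe_re hy hφ_im]
end

section
/- Let ψ : ℝ³ → ℍ be differentiable at a point x, with ψ(y) a purely imaginary unit quaternion for every y. Then for all vectors v, w ∈ ℝ³: |Dψ(x)v · Dψ(x)w − Dψ(x)w · Dψ(x)v| = |Re( ψ(x) · (Dψ(x)v · Dψ(x)w − Dψ(x)w · Dψ(x)v) )|. (This is the pointwise identity |ψ*ω_{S²}| = (8π)⁻¹ |dψ ∧ dψ| used in the proof of existence of minimizers.) -/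
/-!
Write `p = ψ(x)`, `a = Dψ(x)v`, `b = Dψ(x)w` and `c = ab - ba`. Differentiating `ψ·ψ = -1`
shows that `p` anticommutes with `a` and `b`, hence commutes with `c`. Both `p` and `c` are purely
imaginary, so `star (p c) = c p = p c`: the product `p c` is real, and
`‖c‖ = ‖p‖ ‖c‖ = ‖p c‖ = |Re (p c)|`.
-/

open Quaternion

theorem mul_fderiv_add_fderiv_mul_eq_zero {𝕜 E A : Type*} [NontriviallyNormedField 𝕜]
    [NormedAddCommGroup E] [NormedSpace 𝕜 E] [NormedRing A] [NormedAlgebra 𝕜 A]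
    {f : E → A} {x : E} {c : A} (hf : DifferentiableAt 𝕜 f x) (hc : ∀ y, f y * f y = c)
    (v : E) : f x * fderiv 𝕜 f x v + fderiv 𝕜 f x v * f x = 0 := by
  have hconst : HasFDerivAt (f * f) (0 : E →L[𝕜] A) x := by
    rw [show f * f = fun _ => c from funext hc]
    exact hasFDerivAt_const c x
  simpa using congrArg (· v) ((hf.hasFDerivAt.mul' hf.hasFDerivAt).unique hconst)

theorem commute_mul_of_anticommute {R : Type*} [Ring R] {p a b : R}
    (ha : p * a + a * p = 0) (hb : p * b + b * p = 0) : Commute p (a * b) := by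
  rw [add_eq_zero_iff_eq_neg] at ha hb
  calc p * (a * b) = -(a * (p * b)) := by rw [← mul_assoc, ha]; noncomm_ring
    _ = a * b * p := by rw [hb]; noncomm_ring

namespace Quaternion

theorem mul_self_eq_neg_one {q : ℍ} (hre : q.re = 0) (hnorm : ‖q‖ = 1) : q * q = -1 := by
  rw [← sq, sq_eq_neg_normSq.mpr hre, normSq_eq_norm_mul_self, hnorm, mul_one, coe_one]

theorem re_mul_sub_mul (a b : ℍ) : (a * b - b * a).re = 0 := by
  simp only [re_sub, re_mul]
  ring

theorem star_mul_eq_self_of_commute {p c : ℍ} (hp : p.re = 0) (hc : c.re = 0)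
    (hpc : Commute p c) : star (p * c) = p * c := by
  rw [star_mul, star_eq_neg.mpr hp, star_eq_neg.mpr hc, neg_mul_neg, hpc.eq]

theorem norm_eq_abs_re_of_star_eq_self {q : ℍ} (hq : star q = q) : ‖q‖ = |q.re| := by
  rw [star_eq_self.mp hq, norm_coe, re_coe, Real.norm_eq_abs]

end Quaternion

/-- For a map `ψ : ℝ³ → ℍ` differentiable at `x` taking values in the purely
imaginary unit quaternions, and all directions `v, w`:
`|Dψ(x)v · Dψ(x)w − Dψ(x)w · Dψ(x)v| = |Re(ψ(x)(Dψ(x)v·Dψ(x)w − Dψ(x)w·Dψ(x)v))|`.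
This is the pointwise identity `|ψ*ω_{S²}| = (8π)⁻¹|dψ ∧ dψ|`. -/
theorem pullback_norm_identity (ψ : EuclideanSpace ℝ (Fin 3) → ℍ[ℝ])
    (x : EuclideanSpace ℝ (Fin 3)) (hd : DifferentiableAt ℝ ψ x)
    (h_im : ∀ y, (ψ y).re = 0) (h_unit : ∀ y, ‖ψ y‖ = 1)
    (v w : EuclideanSpace ℝ (Fin 3)) :
    ‖fderiv ℝ ψ x v * fderiv ℝ ψ x w - fderiv ℝ ψ x w * fderiv ℝ ψ x v‖ =
      |(ψ x * (fderiv ℝ ψ x v * fderiv ℝ ψ x w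
          - fderiv ℝ ψ x w * fderiv ℝ ψ x v)).re| := by
  set a := fderiv ℝ ψ x v
  set b := fderiv ℝ ψ x w
  have hanti : ∀ u, ψ x * fderiv ℝ ψ x u + fderiv ℝ ψ x u * ψ x = 0 :=
    mul_fderiv_add_fderiv_mul_eq_zero hd fun y => mul_self_eq_neg_one (h_im y) (h_unit y)
  have hcomm : Commute (ψ x) (a * b - b * a) :=
    (commute_mul_of_anticommute (hanti v) (hanti w)).sub_right
      (commute_mul_of_anticommute (hanti w) (hanti v))
  have hreal := star_mul_eq_self_of_commute (h_im x) (re_mul_sub_mul a b) hcomm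
  rw [← norm_eq_abs_re_of_star_eq_self hreal, norm_mul, h_unit x, one_mul]
end

section
/- Let u : ℝ³ → ℍ be differentiable at x with |u(y)| = 1 for every y, and let φ : ℝ³ → ℍ be differentiable at x. Set ψ(y) = u(y)·φ(y)·u(y)* and a(v) = u(x)*·Du(x)v. Then for every v ∈ ℝ³: Dψ(x)v = u(x)·( Dφ(x)v + a(v)·φ(x) − φ(x)·a(v) )·u(x)*. (This is the pointwise identity dψ = u (D_a φ) u* with D_a φ = dφ + [a, φ], underlying the rewriting E(ψ) = E_φ[a] of the Faddeev energy.) -/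
/-!
Differentiating `u u* = 1` gives `D(u*) = -u* (Du) u*`, so the product rule yields
`Dψ = (Du) φ u* + u (Dφ) u* - u φ u* (Du) u*`. Writing `Du = u a` with `a = u* Du` turns this into
`u (Dφ + a φ - φ a) u*`.
-/

open Quaternion Filter Topology

instance {R : Type*} [CommRing R] [StarRing R] [TrivialStar R] : StarModule R ℍ[R] :=
  ⟨fun r a => by ext <;> simp⟩

theorem Quaternion.mem_unitary_of_norm_eq_one {q : ℍ[ℝ]} (hq : ‖q‖ = 1) : q ∈ unitary ℍ[ℝ] := by
  rw [Unitary.mem_iff, star_mul_self, self_mul_star, normSq_eq_norm_mul_self, hq]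
  norm_num

section

variable {𝕜 : Type*} [NontriviallyNormedField 𝕜] {E : Type*} [NormedAddCommGroup E]
  [NormedSpace 𝕜 E] {A : Type*} [NormedRing A] [NormedAlgebra 𝕜 A] {x : E}

theorem fderiv_fun_mul_mul_apply {a b c : E → A} (ha : DifferentiableAt 𝕜 a x)
    (hb : DifferentiableAt 𝕜 b x) (hc : DifferentiableAt 𝕜 c x) (v : E) :
    fderiv 𝕜 (fun y => a y * b y * c y) x v =
      fderiv 𝕜 a x v * b x * c x + a x * fderiv 𝕜 b x v * c x + a x * b x * fderiv 𝕜 c x v := by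
  rw [fderiv_fun_mul' (ha.fun_mul hb) hc, fderiv_fun_mul' ha hb]
  simp only [add_apply, smul_apply, smul_eq_mul, MulOpposite.smul_eq_mul_unop,
    MulOpposite.unop_op, add_mul]
  abel

theorem fderiv_star_apply_of_mem_unitary [StarRing 𝕜] [TrivialStar 𝕜] [StarRing A]
    [StarModule 𝕜 A] [ContinuousStar A] {u : E → A} (hu : DifferentiableAt 𝕜 u x)
    (h_unit : ∀ᶠ y in 𝓝 x, u y ∈ unitary A) (v : E) :
    fderiv 𝕜 (fun y => star (u y)) x v = -(star (u x) * fderiv 𝕜 u x v * star (u x)) := by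
  have h_const : (fun y => u y * star (u y)) =ᶠ[𝓝 x] fun _ => (1 : A) :=
    h_unit.mono fun y hy => Unitary.mul_star_self_of_mem hy
  have h_deriv : u x * fderiv 𝕜 (fun y => star (u y)) x v = -(fderiv 𝕜 u x v * star (u x)) := by
    rw [eq_neg_iff_add_eq_zero]
    simpa using congrArg (· v) ((fderiv_fun_mul' hu hu.star).symm.trans h_const.fderiv_eq)
  have h_inv : star (u x) * u x = 1 := Unitary.star_mul_self_of_mem h_unit.self_of_nhds
  calc fderiv 𝕜 (fun y => star (u y)) x v
      = star (u x) * (u x * fderiv 𝕜 (fun y => star (u y)) x v) := by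
        rw [← mul_assoc, h_inv, one_mul]
    _ = -(star (u x) * fderiv 𝕜 u x v * star (u x)) := by rw [h_deriv, mul_neg, mul_assoc]

end

/-- For `u : ℝ³ → ℍ` of unit norm and `φ : ℝ³ → ℍ`, both differentiable at `x`,
with `ψ = u φ u*` and `a(v) = u(x)* Du(x)v`, one has the pointwise identity
`Dψ(x)v = u(x)(Dφ(x)v + [a(v), φ(x)])u(x)*`, i.e. `dψ = u (D_a φ) u*`,
underlying the rewriting `E(ψ) = E_φ[a]` of the Faddeev energy. -/
theorem derivative_of_conjugated_map (u φ : EuclideanSpace ℝ (Fin 3) → ℍ[ℝ])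
    (x : EuclideanSpace ℝ (Fin 3))
    (hu : DifferentiableAt ℝ u x) (hφ : DifferentiableAt ℝ φ x)
    (h_unit : ∀ y, ‖u y‖ = 1)
    (v : EuclideanSpace ℝ (Fin 3)) :
    fderiv ℝ (fun y => u y * φ y * star (u y)) x v =
      u x * (fderiv ℝ φ x v
          + (star (u x) * fderiv ℝ u x v) * φ x
          - φ x * (star (u x) * fderiv ℝ u x v)) * star (u x) := by
  have h_unitary : ∀ y, u y ∈ unitary ℍ[ℝ] := fun y => mem_unitary_of_norm_eq_one (h_unit y)
  have h_right_inv : u x * star (u x) = 1 := Unitary.mul_star_self_of_mem (h_unitary x)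
  rw [fderiv_fun_mul_mul_apply hu hφ hu.star,
    fderiv_star_apply_of_mem_unitary hu (.of_forall h_unitary)]
  simp only [mul_add, mul_sub, add_mul, sub_mul, mul_neg, mul_assoc]
  rw [← mul_assoc (u x) (star (u x)), h_right_inv, one_mul]
  abel
end

section
/- Let Ω ⊆ ℝ³ be a connected open set and let u, w : Ω → ℍ be differentiable maps with |u(y)| = |w(y)| = 1 for all y ∈ Ω. If u(y)*·Du(y)v = w(y)*·Dw(y)v for every y ∈ Ω and every v ∈ ℝ³, then there exists a constant unit quaternion c such that w(y) = c·u(y) for all y ∈ Ω. (A flat connection with trivial holonomy determines its developing map uniquely up to left multiplication by a constant unit quaternion.) -/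
/-!
For unitary-valued `u` and `w`, the map `g = w u*` has derivative `w' u* + w (u')*`.
Differentiating `u* u = 1` gives `(u')* = -(u* u') u*`, and the hypothesis together with
`w w* = 1` gives `w' = w (u* u')`; so the two terms cancel, `g` is constant on the connected
open set, and `w = g u`.
-/

open Quaternion Filter Topology

instance Quaternion.instStarModule {R : Type*} [CommRing R] [StarRing R] [TrivialStar R] :
    StarModule R ℍ[R] :=
  ⟨fun r a => by ext <;> simp⟩

theorem Quaternion.mem_unitary_iff_norm_eq_one {q : ℍ[ℝ]} : q ∈ unitary ℍ[ℝ] ↔ ‖q‖ = 1 := by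
  refine ⟨CStarRing.norm_of_mem_unitary, fun hq => ?_⟩
  have hq' : ((normSq q : ℝ) : ℍ[ℝ]) = 1 := by
    rw [normSq_eq_norm_mul_self, hq, mul_one, Quaternion.coe_one]
  exact Unitary.mem_iff.2
    ⟨by rw [Quaternion.star_mul_self, hq'], by rw [Quaternion.self_mul_star, hq']⟩

section UnitaryValued

variable {E A : Type*} [NormedAddCommGroup E] [NormedSpace ℝ E]
  [NormedRing A] [NormedAlgebra ℝ A] [StarRing A] [StarModule ℝ A] [ContinuousStar A]
  {u w : E → A} {u' w' : E →L[ℝ] A} {y : E}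

theorem HasFDerivAt.star_apply_mul_add_star_mul_apply_eq_zero (hu : HasFDerivAt u u' y)
    (hu_unitary : ∀ᶠ z in 𝓝 y, star (u z) * u z = 1) (v : E) :
    star (u' v) * u y + star (u y) * u' v = 0 := by
  have hconst : HasFDerivAt (fun z => star (u z) * u z) (0 : E →L[ℝ] A) y :=
    (hasFDerivAt_const (1 : A) y).congr_of_eventuallyEq hu_unitary
  simpa [add_comm] using congr($((hu.star.mul' hu).unique hconst) v)

theorem HasFDerivAt.mul_star_eq_zero_of_star_mul_eq (hu : HasFDerivAt u u' y)
    (hw : HasFDerivAt w w' y) (hu_unitary : ∀ᶠ z in 𝓝 y, u z ∈ unitary A)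
    (hw_unitary : w y ∈ unitary A) (h : ∀ v, star (u y) * u' v = star (w y) * w' v) :
    HasFDerivAt (fun z => w z * star (u z)) (0 : E →L[ℝ] A) y := by
  refine (hw.mul' (HasFDerivAt.star hu)).congr_fderiv (ContinuousLinearMap.ext fun v => ?_)
  have huy : u y ∈ unitary A := hu_unitary.self_of_nhds
  have hskew := hu.star_apply_mul_add_star_mul_apply_eq_zero
    (hu_unitary.mono fun _ hz => Unitary.star_mul_self_of_mem hz) v
  have hw' : w' v = w y * (star (u y) * u' v) := by
    rw [h, ← mul_assoc, Unitary.mul_star_self_of_mem hw_unitary, one_mul]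
  have hstar : star (u' v) = -(star (u y) * u' v) * star (u y) := by
    rw [← eq_neg_of_add_eq_zero_left hskew, mul_assoc, Unitary.mul_star_self_of_mem huy, mul_one]
  simp only [MulOpposite.op_star, add_apply, smul_apply, ContinuousLinearMap.comp_apply,
    ContinuousLinearEquiv.coe_coe, starL'_apply, smul_eq_mul, MulOpposite.smul_eq_mul_unop,
    MulOpposite.unop_star, MulOpposite.unop_op, zero_apply]
  rw [hstar, hw']
  noncomm_ring

theorem IsOpen.exists_mem_unitary_eq_mul_of_star_mul_fderiv_eq {s : Set E} (hs : IsOpen s)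
    (hs' : IsConnected s) (hu : DifferentiableOn ℝ u s) (hw : DifferentiableOn ℝ w s)
    (hu_unitary : ∀ y ∈ s, u y ∈ unitary A) (hw_unitary : ∀ y ∈ s, w y ∈ unitary A)
    (h : ∀ y ∈ s, ∀ v, star (u y) * fderiv ℝ u y v = star (w y) * fderiv ℝ w y v) :
    ∃ c ∈ unitary A, ∀ y ∈ s, w y = c * u y := by
  have hderiv (y) (hy : y ∈ s) : HasFDerivAt (fun z => w z * star (u z)) (0 : E →L[ℝ] A) y :=
    HasFDerivAt.mul_star_eq_zero_of_star_mul_eq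
      (hu.differentiableAt (hs.mem_nhds hy)).hasFDerivAt
      (hw.differentiableAt (hs.mem_nhds hy)).hasFDerivAt
      (eventually_of_mem (hs.mem_nhds hy) hu_unitary) (hw_unitary y hy) (h y hy)
  obtain ⟨y₀, hy₀⟩ := hs'.nonempty
  refine ⟨w y₀ * star (u y₀), mul_mem (hw_unitary y₀ hy₀) (Unitary.star_mem (hu_unitary y₀ hy₀)),
    fun y hy => ?_⟩
  rw [hs.is_const_of_fderiv_eq_zero hs'.isPreconnected
    (fun z hz => (hderiv z hz).differentiableAt.differentiableWithinAt)
    (fun z hz => (hderiv z hz).fderiv) hy₀ hy, mul_assoc,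
    Unitary.star_mul_self_of_mem (hu_unitary y hy), mul_one]

end UnitaryValued

/-- On a connected open set `Ω ⊆ ℝ³`, two differentiable unit-quaternion-valued
maps `u, w` with the same connection form `u* du = w* dw` differ by left
multiplication by a constant unit quaternion: a flat connection with trivial
holonomy determines its developing map up to a constant. -/
theorem developing_map_unique_up_to_constant
    (Ω : Set (EuclideanSpace ℝ (Fin 3))) (hΩo : IsOpen Ω) (hΩc : IsConnected Ω)
    (u w : EuclideanSpace ℝ (Fin 3) → ℍ[ℝ])
    (hu : ∀ y ∈ Ω, DifferentiableAt ℝ u y)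
    (hw : ∀ y ∈ Ω, DifferentiableAt ℝ w y)
    (hu_unit : ∀ y ∈ Ω, ‖u y‖ = 1) (hw_unit : ∀ y ∈ Ω, ‖w y‖ = 1)
    (h : ∀ y ∈ Ω, ∀ v : EuclideanSpace ℝ (Fin 3),
      star (u y) * fderiv ℝ u y v = star (w y) * fderiv ℝ w y v) :
    ∃ c : ℍ[ℝ], ‖c‖ = 1 ∧ ∀ y ∈ Ω, w y = c * u y := by
  obtain ⟨c, hc, hwc⟩ := hΩo.exists_mem_unitary_eq_mul_of_star_mul_fderiv_eq hΩc
    (fun y hy => (hu y hy).differentiableWithinAt) (fun y hy => (hw y hy).differentiableWithinAt)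
    (fun y hy => mem_unitary_iff_norm_eq_one.2 (hu_unit y hy))
    (fun y hy => mem_unitary_iff_norm_eq_one.2 (hw_unit y hy)) h
  exact ⟨c, mem_unitary_iff_norm_eq_one.1 hc, hwc⟩
end

section
/- Let u : ℝ³ → ℍ be twice continuously differentiable with |u(y)| = 1 for every y, and let φ : ℝ³ → ℍ be twice continuously differentiable with φ(y) a purely imaginary unit quaternion for every y. Set ψ(y) = u(y)·φ(y)·u(y)*. Then for every point x and all vectors v, w ∈ ℝ³: Re( ψ(x)·(Dψ(x)v·Dψ(x)w − Dψ(x)w·Dψ(x)v) ) = Re( φ(x)·(Dφ(x)v·Dφ(x)w − Dφ(x)w·Dφ(x)v) ) − 4·( D_v(y ↦ Re(φ(y)·u(y)*·Du(y)w))(x) − D_w(y ↦ Re(φ(y)·u(y)*·Du(y)v))(x) ). (This is the pointwise form of the identity (uφu*)*ω_{S²} = φ*ω_{S²} + (1/2π)·d Re(φ u* du), where ω_{S²} = −(1/8π) Re(z dz ∧ dz).) -/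
open Quaternion

noncomputable instance : StarModule ℝ ℍ[ℝ] := ⟨fun r q => by ext <;> simp⟩

private lemma re_mul_comm (x y : ℍ[ℝ]) : (x * y).re = (y * x).re := by
  rw [Quaternion.re_mul, Quaternion.re_mul]; ring

private lemma side_lemma (p a b A B : ℍ[ℝ]) (hp : p * p = -1)
    (ha : p * a = -(a * p)) (hb : p * b = -(b * p)) :
    (p * ((a + A * p - p * A) * (b + B * p - p * B))).re
      = (p * (a * b)).re - 2 * (a * B).re + 2 * (b * A).re
        + 2 * (p * (A * B)).re - 2 * (p * (B * A)).re := by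
  have hb' : b * p = -(p * b) := by rw [hb, neg_neg]
  have e : p * ((a + A * p - p * A) * (b + B * p - p * B)) =
      p*a*b + p*a*B*p - p*a*p*B + p*A*p*b + p*A*p*B*p - p*A*p*p*B
        - p*p*A*b - p*p*A*B*p + p*p*A*p*B := by noncomm_ring
  rw [e]
  have m3 : p*a*p*B = a*B := by
    rw [show p*a*p*B = (p*a)*(p*B) by noncomm_ring, ha,
      show -(a*p)*(p*B) = -(a*((p*p)*B)) by noncomm_ring, hp]
    noncomm_ring
  have m6 : p*A*p*p*B = -(p*(A*B)) := by
    rw [show p*A*p*p*B = p*A*((p*p)*B) by noncomm_ring, hp]; noncomm_ring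
  have m7 : p*p*A*b = -(A*b) := by
    rw [show p*p*A*b = (p*p)*(A*b) by noncomm_ring, hp]; noncomm_ring
  rw [m3, m6, m7, show p*a*b = p*(a*b) by noncomm_ring]
  simp only [Quaternion.re_add, Quaternion.re_sub, Quaternion.re_neg]
  have m2 : (p*a*B*p).re = -((a*B).re) := by
    rw [re_mul_comm (p*a*B) p, show p*(p*a*B) = (p*p)*(a*B) by noncomm_ring, hp,
      show (-1 : ℍ[ℝ])*(a*B) = -(a*B) by noncomm_ring, Quaternion.re_neg]
  have m4 : (p*A*p*b).re = (b*A).re := by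
    rw [re_mul_comm (p*A*p) b, show b*(p*A*p) = (b*p)*(A*p) by noncomm_ring, hb',
      show -(p*b)*(A*p) = -((p*(b*A))*p) by noncomm_ring, Quaternion.re_neg,
      re_mul_comm (p*(b*A)) p, show p*(p*(b*A)) = (p*p)*(b*A) by noncomm_ring, hp,
      show (-1 : ℍ[ℝ])*(b*A) = -(b*A) by noncomm_ring, Quaternion.re_neg, neg_neg]
  have m5 : (p*A*p*B*p).re = -((p*(B*A)).re) := by
    rw [re_mul_comm (p*A*p*B) p, show p*(p*A*p*B) = (p*p)*(A*(p*B)) by noncomm_ring, hp,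
      show (-1 : ℍ[ℝ])*(A*(p*B)) = -(A*(p*B)) by noncomm_ring, Quaternion.re_neg,
      re_mul_comm A (p*B), show (p*B)*A = p*(B*A) by noncomm_ring]
  have m8 : (p*p*A*B*p).re = -((p*(A*B)).re) := by
    rw [re_mul_comm (p*p*A*B) p, show p*(p*p*A*B) = (p*p)*(p*(A*B)) by noncomm_ring, hp,
      show (-1 : ℍ[ℝ])*(p*(A*B)) = -(p*(A*B)) by noncomm_ring, Quaternion.re_neg]
  have m9 : (p*p*A*p*B).re = -((p*(B*A)).re) := by
    rw [show p*p*A*p*B = (p*p)*(A*(p*B)) by noncomm_ring, hp,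
      show (-1 : ℍ[ℝ])*(A*(p*B)) = -(A*(p*B)) by noncomm_ring, Quaternion.re_neg,
      re_mul_comm A (p*B), show (p*B)*A = p*(B*A) by noncomm_ring]
  have m7' : (A*b).re = (b*A).re := re_mul_comm A b
  rw [m2, m4, m5, m8, m9, m7']
  ring

private lemma conj_deriv (U P A aq : ℍ[ℝ]) (hU : U * star U = 1) (hA : star A = -A) :
    (U * P) * star (U * A) + (U * aq + (U * A) * P) * star U
      = U * (aq + A * P - P * A) * star U := by
  rw [star_mul, hA]
  noncomm_ring

private noncomputable def reCLM : ℍ[ℝ] →L[ℝ] ℝ :=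
  LinearMap.toContinuousLinearMap (QuaternionAlgebra.reₗ (-1 : ℝ) (0 : ℝ) (-1 : ℝ))

private lemma reCLM_apply (q : ℍ[ℝ]) : reCLM q = q.re := rfl

set_option maxHeartbeats 2000000 in

/-- Pointwise form of the identity
`(uφu*)*ω_{S²} = φ*ω_{S²} + (1/2π) d Re(φ u* du)` with
`ω_{S²} = −(1/8π) Re(z dz ∧ dz)`: for `u` twice continuously differentiable of
unit norm, `φ` twice continuously differentiable with purely imaginary unit
values, and `ψ = u φ u*`, one has for all `x, v, w`:
`Re(ψ(Dψv·Dψw − Dψw·Dψv)) = Re(φ(Dφv·Dφw − Dφw·Dφv))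
  − 4(D_v Re(φ u* Du w) − D_w Re(φ u* Du v))`. -/
theorem pullback_2form_identity
    (u φ : EuclideanSpace ℝ (Fin 3) → ℍ[ℝ])
    (hu : ContDiff ℝ 2 u) (hφ : ContDiff ℝ 2 φ)
    (hu_unit : ∀ y, ‖u y‖ = 1)
    (hφ_im : ∀ y, (φ y).re = 0) (hφ_unit : ∀ y, ‖φ y‖ = 1)
    (ψ : EuclideanSpace ℝ (Fin 3) → ℍ[ℝ])
    (hψ : ψ = fun y => u y * φ y * star (u y))
    (x v w : EuclideanSpace ℝ (Fin 3)) :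
    (ψ x * (fderiv ℝ ψ x v * fderiv ℝ ψ x w
        - fderiv ℝ ψ x w * fderiv ℝ ψ x v)).re =
      (φ x * (fderiv ℝ φ x v * fderiv ℝ φ x w
          - fderiv ℝ φ x w * fderiv ℝ φ x v)).re
      - 4 * (fderiv ℝ (fun y => (φ y * (star (u y) * fderiv ℝ u y w)).re) x v
          - fderiv ℝ (fun y => (φ y * (star (u y) * fderiv ℝ u y v)).re) x w) := by
  have hud : Differentiable ℝ u := hu.differentiable two_ne_zero
  have hφd : Differentiable ℝ φ := hφ.differentiable two_ne_zero
  have hu1 : ∀ y, star (u y) * u y = 1 := by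
    intro y
    rw [Quaternion.star_mul_self, Quaternion.normSq_eq_norm_mul_self, hu_unit y]
    norm_num
  have hu1' : ∀ y, u y * star (u y) = 1 := by
    intro y
    rw [Quaternion.self_mul_star, Quaternion.normSq_eq_norm_mul_self, hu_unit y]
    norm_num
  have hφconst : ∀ y, φ y * φ y = -1 := by
    intro y
    have h := Quaternion.self_mul_star (a := φ y)
    rw [Quaternion.star_eq_neg.mpr (hφ_im y), mul_neg] at h
    have h2 : ((Quaternion.normSq (φ y) : ℝ) : ℍ[ℝ]) = 1 := by
      rw [Quaternion.normSq_eq_norm_mul_self, hφ_unit y]; norm_num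
    rw [h2] at h
    exact neg_eq_iff_eq_neg.mp h
  have hanti : ∀ z, star (u x) * fderiv ℝ u x z + star (fderiv ℝ u x z) * u x = 0 := by
    intro z
    have hd : HasFDerivAt (fun y => star (u y) * u y)
        ((star (u x)) • fderiv ℝ u x
          + (((starL' ℝ : ℍ[ℝ] ≃L[ℝ] ℍ[ℝ]) : ℍ[ℝ] →L[ℝ] ℍ[ℝ]).comp
              (fderiv ℝ u x)).smulRight (u x)) x :=
      ((hud x).hasFDerivAt.star).mul' (hud x).hasFDerivAt
    have hd0 : HasFDerivAt (fun y => star (u y) * u y)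
        (0 : EuclideanSpace ℝ (Fin 3) →L[ℝ] ℍ[ℝ]) x := by
      have hcon : (fun y => star (u y) * u y) = fun _ => (1 : ℍ[ℝ]) := funext hu1
      rw [hcon]; exact hasFDerivAt_const _ _
    have h0 := hd.unique hd0
    have h1 := congrArg (fun L : EuclideanSpace ℝ (Fin 3) →L[ℝ] ℍ[ℝ] => L z) h0
    simpa [smul_eq_mul] using h1
  have hstarA : ∀ z, star (star (u x) * fderiv ℝ u x z)
      = -(star (u x) * fderiv ℝ u x z) := by
    intro z
    rw [star_mul, star_star]
    exact eq_neg_of_add_eq_zero_left (by rw [add_comm]; exact hanti z)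
  have hUz : ∀ z, fderiv ℝ u x z = u x * (star (u x) * fderiv ℝ u x z) := by
    intro z; rw [← mul_assoc, hu1' x, one_mul]
  have hpa : ∀ z, φ x * fderiv ℝ φ x z = -(fderiv ℝ φ x z * φ x) := by
    intro z
    have hd : HasFDerivAt (fun y => φ y * φ y)
        (φ x • fderiv ℝ φ x + (fderiv ℝ φ x).smulRight (φ x)) x :=
      (hφd x).hasFDerivAt.mul' (hφd x).hasFDerivAt
    have hd0 : HasFDerivAt (fun y => φ y * φ y)
        (0 : EuclideanSpace ℝ (Fin 3) →L[ℝ] ℍ[ℝ]) x := by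
      have hcon : (fun y => φ y * φ y) = fun _ => (-1 : ℍ[ℝ]) := funext hφconst
      rw [hcon]; exact hasFDerivAt_const _ _
    have h0 := hd.unique hd0
    have h1 := congrArg (fun L : EuclideanSpace ℝ (Fin 3) →L[ℝ] ℍ[ℝ] => L z) h0
    simp only [ContinuousLinearMap.add_apply, ContinuousLinearMap.coe_smul', Pi.smul_apply,
      ContinuousLinearMap.smulRight_apply, ContinuousLinearMap.zero_apply, smul_eq_mul] at h1
    exact eq_neg_of_add_eq_zero_left h1
  have hψd : ∀ z, fderiv ℝ ψ x z
      = u x * (fderiv ℝ φ x z + (star (u x) * fderiv ℝ u x z) * φ x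
          - φ x * (star (u x) * fderiv ℝ u x z)) * star (u x) := by
    intro z
    have h1 : HasFDerivAt (fun y => u y * φ y)
        (u x • fderiv ℝ φ x + (fderiv ℝ u x).smulRight (φ x)) x :=
      (hud x).hasFDerivAt.mul' (hφd x).hasFDerivAt
    have h2 : HasFDerivAt ψ
        ((u x * φ x) • (((starL' ℝ : ℍ[ℝ] ≃L[ℝ] ℍ[ℝ]) : ℍ[ℝ] →L[ℝ] ℍ[ℝ]).comp (fderiv ℝ u x))
          + (u x • fderiv ℝ φ x + (fderiv ℝ u x).smulRight (φ x)).smulRight (star (u x))) x := by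
      rw [hψ]
      exact h1.mul' ((hud x).hasFDerivAt.star)
    rw [h2.fderiv]
    simp only [ContinuousLinearMap.add_apply, ContinuousLinearMap.coe_smul', Pi.smul_apply,
      ContinuousLinearMap.smulRight_apply, ContinuousLinearMap.coe_comp', Function.comp_apply,
      ContinuousLinearEquiv.coe_coe, starL'_apply, smul_eq_mul]
    have hc := conj_deriv (u x) (φ x) (star (u x) * fderiv ℝ u x z) (fderiv ℝ φ x z)
      (hu1' x) (hstarA z)
    rw [← hUz z] at hc
    exact hc
  have hconj_mul : ∀ q r : ℍ[ℝ],
      (u x * q * star (u x)) * (u x * r * star (u x)) = u x * (q * r) * star (u x) := by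
    intro q r
    rw [show (u x * q * star (u x)) * (u x * r * star (u x))
        = u x * (q * ((star (u x) * u x) * r)) * star (u x) by noncomm_ring, hu1 x, one_mul]
  have hconj_re : ∀ q : ℍ[ℝ], (u x * q * star (u x)).re = q.re := by
    intro q
    rw [re_mul_comm (u x * q) (star (u x)), ← mul_assoc, hu1 x, one_mul]
  have hu2 : ContDiff ℝ 1 (fderiv ℝ u) := hu.fderiv_right (by norm_num)
  have hsymm : fderiv ℝ (fderiv ℝ u) x v w = fderiv ℝ (fderiv ℝ u) x w v :=
    (hu.contDiffAt.isSymmSndFDerivAt (by norm_num)) v w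
  have hG : ∀ z₁ z₂ : EuclideanSpace ℝ (Fin 3),
      fderiv ℝ (fun y => (φ y * (star (u y) * fderiv ℝ u y z₂)).re) x z₁
        = (fderiv ℝ φ x z₁ * (star (u x) * fderiv ℝ u x z₂)).re
          + (φ x * (star (u x) * (fderiv ℝ (fderiv ℝ u) x z₁ z₂))).re
          + (φ x * (star (fderiv ℝ u x z₁) * fderiv ℝ u x z₂)).re := by
    intro z₁ z₂
    have hDu : HasFDerivAt (fun y => fderiv ℝ u y z₂)
        ((ContinuousLinearMap.apply ℝ ℍ[ℝ] z₂).comp (fderiv ℝ (fderiv ℝ u) x)) x :=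
      (ContinuousLinearMap.apply ℝ ℍ[ℝ] z₂).hasFDerivAt.comp x
        ((hu2.differentiable one_ne_zero) x).hasFDerivAt
    have hsu : HasFDerivAt (fun y => star (u y) * fderiv ℝ u y z₂)
        (star (u x) • ((ContinuousLinearMap.apply ℝ ℍ[ℝ] z₂).comp (fderiv ℝ (fderiv ℝ u) x))
          + (((starL' ℝ : ℍ[ℝ] ≃L[ℝ] ℍ[ℝ]) : ℍ[ℝ] →L[ℝ] ℍ[ℝ]).comp
              (fderiv ℝ u x)).smulRight (fderiv ℝ u x z₂)) x :=
      ((hud x).hasFDerivAt.star).mul' hDu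
    have hGq : HasFDerivAt (fun y => φ y * (star (u y) * fderiv ℝ u y z₂))
        (φ x • (star (u x) • ((ContinuousLinearMap.apply ℝ ℍ[ℝ] z₂).comp
              (fderiv ℝ (fderiv ℝ u) x))
            + (((starL' ℝ : ℍ[ℝ] ≃L[ℝ] ℍ[ℝ]) : ℍ[ℝ] →L[ℝ] ℍ[ℝ]).comp
                (fderiv ℝ u x)).smulRight (fderiv ℝ u x z₂))
          + (fderiv ℝ φ x).smulRight (star (u x) * fderiv ℝ u x z₂)) x :=
      (hφd x).hasFDerivAt.mul' hsu
    have hfin : HasFDerivAt (fun y => (φ y * (star (u y) * fderiv ℝ u y z₂)).re)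
        (reCLM.comp (φ x • (star (u x) • ((ContinuousLinearMap.apply ℝ ℍ[ℝ] z₂).comp
              (fderiv ℝ (fderiv ℝ u) x))
            + (((starL' ℝ : ℍ[ℝ] ≃L[ℝ] ℍ[ℝ]) : ℍ[ℝ] →L[ℝ] ℍ[ℝ]).comp
                (fderiv ℝ u x)).smulRight (fderiv ℝ u x z₂))
          + (fderiv ℝ φ x).smulRight (star (u x) * fderiv ℝ u x z₂))) x :=
      reCLM.hasFDerivAt.comp x hGq
    rw [hfin.fderiv]
    simp only [ContinuousLinearMap.coe_comp', Function.comp_apply,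
      ContinuousLinearMap.add_apply, ContinuousLinearMap.coe_smul', Pi.smul_apply,
      ContinuousLinearMap.smulRight_apply, ContinuousLinearMap.apply_apply,
      ContinuousLinearEquiv.coe_coe, starL'_apply, smul_eq_mul, reCLM_apply]
    simp only [mul_add, Quaternion.re_add]
    ring
  have hABw : star (fderiv ℝ u x v) * fderiv ℝ u x w
      = -((star (u x) * fderiv ℝ u x v) * (star (u x) * fderiv ℝ u x w)) := by
    have hsvu : star (fderiv ℝ u x v) * u x = -(star (u x) * fderiv ℝ u x v) :=
      eq_neg_of_add_eq_zero_left (by rw [add_comm]; exact hanti v)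
    conv_lhs => rw [hUz w]
    rw [← mul_assoc, hsvu, neg_mul]
  have hABv : star (fderiv ℝ u x w) * fderiv ℝ u x v
      = -((star (u x) * fderiv ℝ u x w) * (star (u x) * fderiv ℝ u x v)) := by
    have hswu : star (fderiv ℝ u x w) * u x = -(star (u x) * fderiv ℝ u x w) :=
      eq_neg_of_add_eq_zero_left (by rw [add_comm]; exact hanti w)
    conv_lhs => rw [hUz v]
    rw [← mul_assoc, hswu, neg_mul]
  have hψx : ψ x = u x * φ x * star (u x) := by rw [hψ]
  rw [hψd v, hψd w, hψx, hG v w, hG w v, hABw, hABv, hsymm]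
  rw [hconj_mul, hconj_mul, mul_sub, hconj_mul, hconj_mul, Quaternion.re_sub,
    hconj_re, hconj_re]
  rw [side_lemma (φ x) (fderiv ℝ φ x v) (fderiv ℝ φ x w)
      (star (u x) * fderiv ℝ u x v) (star (u x) * fderiv ℝ u x w)
      (hφconst x) (hpa v) (hpa w),
    side_lemma (φ x) (fderiv ℝ φ x w) (fderiv ℝ φ x v)
      (star (u x) * fderiv ℝ u x w) (star (u x) * fderiv ℝ u x v)
      (hφconst x) (hpa w) (hpa v)]
  rw [mul_sub, Quaternion.re_sub]
  simp only [mul_neg, Quaternion.re_neg]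
  ring
end
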